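/- Suppose η(ω)f(ω) = 0 for μ-a.e. ω and R₀ ≤ 1, where R₀ = ∫_Ω q(ω) f(ω) β(ω)/γ(ω) dμ(ω). Then every solution I of the heterogeneous SIS model satisfies lim_{t→∞} I(t,ω) = 0 for μ-a.e. ω ∈ Ω; i.e., the disease-free steady state is globally asymptotically attracting. -/

import Mathlib

/-!
Where `η f = 0` the source term vanishes, so while `J ≤ b` on `[t₀, ∞)` each `I(·, ω)` satisfies
`I' ≤ β b f - (β b + γ) I`; hence `I(t, ω)` lies below `h(b, ω) = f β b / (β b + γ)` up to an error
`f e^{-ε (t - t₀)}`. Integrating against `q` gives `limsup J ≤ T(b) := ∫ q h(b, ·)` for every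
`b > A := limsup J`. Writing `β b / (β b + γ) = x / (1 + x)` with `x = β b / γ ≥ (ε / M) b`, the
defect `x - x / (1 + x)` is bounded below uniformly in `ω`, so `T(b) ≤ R₀ b - δ(A) ≤ b - δ(A)` with
`δ(A) > 0` unless `A = 0`. Thus `limsup J = 0`, and the pointwise bound then forces `I(t, ω) → 0`.
-/

open MeasureTheory Filter Set Topology

variable {Ω : Type*} [MeasurableSpace Ω]

/-- The aggregated weighted infected population `J(t) = ∫ q(ω) I(t,ω) dμ(ω)`. -/
noncomputable def Jfun (μ : Measure Ω) (q : Ω → ℝ) (I : ℝ → Ω → ℝ) (t : ℝ) : ℝ :=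
  ∫ ω, q ω * I t ω ∂μ

/-- The right-hand side of the heterogeneous SIS equation, i.e. `∂I/∂t(t,ω)`. -/
noncomputable def Dfun (μ : Measure Ω) (q β γ η f : Ω → ℝ) (I : ℝ → Ω → ℝ)
    (t : ℝ) (ω : Ω) : ℝ :=
  (β ω * Jfun μ q I t + η ω) * f ω - (β ω * Jfun μ q I t + η ω + γ ω) * I t ω

/-- A solution of the heterogeneous SIS model: for each `t ≥ 0`, `I(t,·)` is
measurable with `0 ≤ I(t,ω) ≤ f(ω)`; for each `ω`, `t ↦ I(t,ω)` is differentiable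
on `[0,∞)` with derivative `(β(ω)J(t)+η(ω))f(ω) − (β(ω)J(t)+η(ω)+γ(ω))I(t,ω)`;
and `J` is differentiable on `[0,∞)` with `J'(t) = ∫ q(ω) ∂I/∂t(t,ω) dμ(ω)`. -/
def IsSolution (μ : Measure Ω) (q β γ η f : Ω → ℝ) (I : ℝ → Ω → ℝ) : Prop :=
  (∀ t, 0 ≤ t → Measurable (fun ω => I t ω)) ∧
  (∀ t, 0 ≤ t → ∀ ω, 0 ≤ I t ω ∧ I t ω ≤ f ω) ∧
  (∀ ω, ∀ t, 0 ≤ t →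
    HasDerivWithinAt (fun s => I s ω) (Dfun μ q β γ η f I t ω) (Ici 0) t) ∧
  (∀ t, 0 ≤ t →
    HasDerivWithinAt (Jfun μ q I) (∫ ω, q ω * Dfun μ q β γ η f I t ω ∂μ) (Ici 0) t)

/-- `h(x,ω) = f(ω)(β(ω)x + η(ω))/(β(ω)x + η(ω) + γ(ω))`. -/
noncomputable def hfun (β γ η f : Ω → ℝ) (x : ℝ) (ω : Ω) : ℝ :=
  f ω * ((β ω * x + η ω) / (β ω * x + η ω + γ ω))

open Real

lemma le_div_add_mul_exp_of_deriv_le_sub_mul {u u' : ℝ → ℝ} {a b B c x : ℝ} (hB : B ≠ 0)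
    (hu : ContinuousOn u (Icc a b)) (hu' : ∀ x ∈ Ico a b, HasDerivWithinAt u (u' x) (Ici x) x)
    (bound : ∀ x ∈ Ico a b, u' x ≤ c - B * u x) (hx : x ∈ Icc a b) :
    u x ≤ c / B + (u a - c / B) * exp (-B * (x - a)) := by
  have h := le_gronwallBound_of_liminf_deriv_right_le (K := -B) (ε := c) hu
    (fun x hx _ hr => (hu' x hx).liminf_right_slope_le hr) le_rfl
    (fun x hx => by linarith [bound x hx]) x hx
  rw [gronwallBound_of_K_ne_0 (neg_ne_zero.2 hB)] at h
  convert h using 1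
  field_simp
  ring

lemma div_one_add_le_sub {x y : ℝ} (hy : 0 ≤ y) (hyx : y ≤ x) :
    x / (1 + x) ≤ x - y ^ 2 / (1 + y) := by
  have hx : 0 ≤ x := hy.trans hyx
  have hmono : y ^ 2 / (1 + y) ≤ x ^ 2 / (1 + x) := by
    rw [div_le_div_iff₀ (by positivity) (by positivity)]
    nlinarith [mul_nonneg (mul_nonneg hy hx) (sub_nonneg.2 hyx)]
  have hx' : x / (1 + x) = x - x ^ 2 / (1 + x) := by
    field_simp
    ring
  linarith

lemma mul_div_mul_add_le_sub {β γ κ a b : ℝ} (hγ : 0 < γ) (hκ : 0 ≤ κ) (hκβ : κ ≤ β / γ)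
    (ha : 0 ≤ a) (hab : a ≤ b) :
    β * b / (β * b + γ) ≤ β / γ * b - (κ * a) ^ 2 / (1 + κ * a) := by
  have h : β * b / (β * b + γ) = β / γ * b / (1 + β / γ * b) := by
    field_simp
    ring
  rw [h]
  exact div_one_add_le_sub (mul_nonneg hκ ha) (mul_le_mul hκβ hab ha (hκ.trans hκβ))

lemma eq_zero_of_forall_lt_add_sq_div_le {A κ : ℝ} (hA : 0 ≤ A) (hκ : 0 < κ)
    (h : ∀ b, A < b → A + (κ * A) ^ 2 / (1 + κ * A) ≤ b) : A = 0 := by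
  have hgap : (κ * A) ^ 2 / (1 + κ * A) ≤ 0 := by
    linarith [le_of_forall_gt_imp_ge_of_dense h]
  rw [div_le_iff₀ (by positivity), zero_mul] at hgap
  have hκA : κ * A = 0 := pow_eq_zero_iff two_ne_zero |>.1 (le_antisymm hgap (sq_nonneg _))
  exact (mul_eq_zero.1 hκA).resolve_left hκ.ne'

lemma tendsto_exp_neg_mul_sub_atTop {ε : ℝ} (hε : 0 < ε) (t₀ : ℝ) :
    Tendsto (fun t => exp (-ε * (t - t₀))) atTop (𝓝 0) :=
  tendsto_exp_atBot.comp ((tendsto_atTop_add_const_right _ _ tendsto_id).const_mul_atTop_of_neg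
    (neg_neg_of_pos hε))

lemma limsup_le_of_le_add_mul_exp {u : ℝ → ℝ} {a C ε t₀ : ℝ} (hε : 0 < ε)
    (hu : IsBoundedUnder (· ≥ ·) atTop u) (h : ∀ t ≥ t₀, u t ≤ a + C * exp (-ε * (t - t₀))) :
    limsup u atTop ≤ a := by
  have hv : Tendsto (fun t => a + C * exp (-ε * (t - t₀))) atTop (𝓝 a) := by
    simpa using tendsto_const_nhds.add ((tendsto_exp_neg_mul_sub_atTop hε t₀).const_mul C)
  calc limsup u atTop
      ≤ limsup (fun t => a + C * exp (-ε * (t - t₀))) atTop :=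
        limsup_le_limsup (eventually_atTop.2 ⟨t₀, h⟩) hu.isCoboundedUnder_le hv.isBoundedUnder_le
    _ = a := hv.limsup_eq

lemma hfun_of_mul_eq_zero {α : Type*} {β γ η f : α → ℝ} {a : α} (h : η a * f a = 0) (x : ℝ) :
    hfun β γ η f x a = f a * (β a * x / (β a * x + γ a)) := by
  rcases mul_eq_zero.1 h with h | h <;> simp [hfun, h]

lemma hfun_nonneg_and_le {α : Type*} {β γ η f : α → ℝ} {a : α} {x : ℝ} (hβ : 0 ≤ β a)
    (hγ : 0 ≤ γ a) (hη : 0 ≤ η a) (hf : 0 ≤ f a) (hx : 0 ≤ x) :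
    0 ≤ hfun β γ η f x a ∧ hfun β γ η f x a ≤ f a := by
  have hnum : 0 ≤ β a * x + η a := by positivity
  have hfrac : (β a * x + η a) / (β a * x + η a + γ a) ≤ 1 :=
    div_le_one_of_le₀ (by linarith) (by linarith)
  exact ⟨by unfold hfun; positivity, mul_le_of_le_one_right hf hfrac⟩

section SIS

variable {μ : Measure Ω} {q β γ η f : Ω → ℝ} {I : ℝ → Ω → ℝ} {ω : Ω} {ε b t t₀ : ℝ}

lemma integrable_mul_of_le {g : Ω → ℝ} (hqf : Integrable (fun ω => q ω * f ω) μ)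
    (hmq : Measurable q) (hmg : Measurable g) (hq : ∀ ω, 0 ≤ q ω)
    (hg : ∀ ω, 0 ≤ g ω ∧ g ω ≤ f ω) : Integrable (fun ω => q ω * g ω) μ :=
  hqf.mono' (hmq.mul hmg).aestronglyMeasurable <| ae_of_all _ fun ω => by
    rw [Real.norm_eq_abs, abs_of_nonneg (mul_nonneg (hq ω) (hg ω).1)]
    exact mul_le_mul_of_nonneg_left (hg ω).2 (hq ω)

lemma integrable_mul_hfun (hmq : Measurable q) (hmβ : Measurable β) (hmγ : Measurable γ)
    (hmη : Measurable η) (hmf : Measurable f) (hqf : Integrable (fun ω => q ω * f ω) μ)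
    (hq : ∀ ω, 0 ≤ q ω) (hβ : ∀ ω, 0 ≤ β ω) (hγ : ∀ ω, 0 ≤ γ ω) (hη : ∀ ω, 0 ≤ η ω)
    (hf : ∀ ω, 0 ≤ f ω) (hb : 0 ≤ b) : Integrable (fun ω => q ω * hfun β γ η f b ω) μ :=
  integrable_mul_of_le hqf hmq (by unfold hfun; fun_prop) hq
    fun ω => hfun_nonneg_and_le (hβ ω) (hγ ω) (hη ω) (hf ω) hb

lemma integral_mul_hfun_le {M a : ℝ} (hh : Integrable (fun ω => q ω * hfun β γ η f b ω) μ)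
    (hR : Integrable (fun ω => q ω * f ω * (β ω / γ ω)) μ) (hqf : ∫ ω, q ω * f ω ∂μ = 1)
    (hq : ∀ ω, 0 ≤ q ω) (hf : ∀ ω, 0 ≤ f ω) (hηf : ∀ᵐ ω ∂μ, η ω * f ω = 0) (hε : 0 < ε)
    (hβ : ∀ ω, ε ≤ β ω) (hγ : ∀ ω, ε ≤ γ ω) (hγM : ∀ ω, γ ω ≤ M) (ha : 0 ≤ a) (hab : a ≤ b) :
    ∫ ω, q ω * hfun β γ η f b ω ∂μ ≤
      (∫ ω, q ω * f ω * (β ω / γ ω) ∂μ) * b - (ε / M * a) ^ 2 / (1 + ε / M * a) := by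
  have hqfI : Integrable (fun ω => q ω * f ω) μ := .of_integral_ne_zero (by simp [hqf])
  set φ := (ε / M * a) ^ 2 / (1 + ε / M * a)
  calc ∫ ω, q ω * hfun β γ η f b ω ∂μ
      ≤ ∫ ω, q ω * f ω * (β ω / γ ω) * b - q ω * f ω * φ ∂μ := by
        refine integral_mono_ae hh ((hR.mul_const b).sub (hqfI.mul_const φ)) ?_
        filter_upwards [hηf] with ω hω
        have hγ₀ : 0 < γ ω := hε.trans_le (hγ ω)
        have hM : 0 < M := hγ₀.trans_le (hγM ω)
        have hfrac := mul_div_mul_add_le_sub hγ₀ (by positivity : 0 ≤ ε / M)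
          (div_le_div₀ (hε.le.trans (hβ ω)) (hβ ω) hγ₀ (hγM ω)) ha hab
        rw [hfun_of_mul_eq_zero hω]
        exact (mul_le_mul_of_nonneg_left (mul_le_mul_of_nonneg_left hfrac (hf ω)) (hq ω)).trans_eq
          (by ring)
    _ = (∫ ω, q ω * f ω * (β ω / γ ω) ∂μ) * b - φ := by
        rw [integral_sub (hR.mul_const b) (hqfI.mul_const φ), integral_mul_const,
          integral_mul_const, hqf, one_mul]

lemma Dfun_le (hβ : 0 ≤ β ω) (hη : 0 ≤ η ω) (hηf : η ω * f ω = 0) (hI : 0 ≤ I t ω)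
    (hIf : I t ω ≤ f ω) (hJ : Jfun μ q I t ≤ b) :
    Dfun μ q β γ η f I t ω ≤ β ω * b * f ω - (β ω * b + γ ω) * I t ω := by
  unfold Dfun
  nlinarith [mul_nonneg (mul_nonneg hβ (sub_nonneg.2 hJ)) (sub_nonneg.2 hIf), mul_nonneg hη hI]

namespace IsSolution

lemma nonneg_and_le (hI : IsSolution μ q β γ η f I) (ht : 0 ≤ t) (ω : Ω) :
    0 ≤ I t ω ∧ I t ω ≤ f ω :=
  hI.2.1 t ht ω

lemma le_hfun_add_mul_exp (hI : IsSolution μ q β γ η f I) (hε : 0 < ε) (hβ : 0 ≤ β ω)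
    (hγ : ε ≤ γ ω) (hη : 0 ≤ η ω) (hηf : η ω * f ω = 0) (hb : 0 ≤ b) (ht₀ : 0 ≤ t₀)
    (hJ : ∀ t ≥ t₀, Jfun μ q I t ≤ b) (ht : t₀ ≤ t) :
    I t ω ≤ hfun β γ η f b ω + f ω * exp (-ε * (t - t₀)) := by
  obtain ⟨-, hIbd, hIderiv, -⟩ := hI
  have hεB : ε ≤ β ω * b + γ ω := by nlinarith [mul_nonneg hβ hb]
  have hcont : ContinuousOn (fun s => I s ω) (Icc t₀ t) := fun s hs =>
    (hIderiv ω s (ht₀.trans hs.1)).continuousWithinAt.mono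
      (Icc_subset_Ici_self.trans (Ici_subset_Ici.2 ht₀))
  have hcomp := le_div_add_mul_exp_of_deriv_le_sub_mul (hε.trans_le hεB).ne' hcont
    (fun s hs => (hIderiv ω s (ht₀.trans hs.1)).mono (Ici_subset_Ici.2 (ht₀.trans hs.1)))
    (fun s hs => Dfun_le hβ hη hηf (hIbd s (ht₀.trans hs.1) ω).1
      (hIbd s (ht₀.trans hs.1) ω).2 (hJ s hs.1)) ⟨ht, le_rfl⟩
  have hc : β ω * b * f ω / (β ω * b + γ ω) = hfun β γ η f b ω := by
    rw [hfun_of_mul_eq_zero hηf]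
    ring
  rw [hc] at hcomp
  have hI₀ := hIbd t₀ ht₀ ω
  have hh := hfun_nonneg_and_le hβ (hε.le.trans hγ) hη (hI₀.1.trans hI₀.2) hb
  calc I t ω ≤ hfun β γ η f b ω + f ω * exp (-(β ω * b + γ ω) * (t - t₀)) := by
        nlinarith [exp_pos (-(β ω * b + γ ω) * (t - t₀))]
    _ ≤ hfun β γ η f b ω + f ω * exp (-ε * (t - t₀)) := by
        gcongr
        exact hI₀.1.trans hI₀.2

lemma Jfun_nonneg (hI : IsSolution μ q β γ η f I) (hq : ∀ ω, 0 ≤ q ω) (ht : 0 ≤ t) :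
    0 ≤ Jfun μ q I t :=
  integral_nonneg fun ω => mul_nonneg (hq ω) (hI.nonneg_and_le ht ω).1

lemma integrable_mul (hI : IsSolution μ q β γ η f I) (hmq : Measurable q) (hq : ∀ ω, 0 ≤ q ω)
    (hqf : Integrable (fun ω => q ω * f ω) μ) (ht : 0 ≤ t) :
    Integrable (fun ω => q ω * I t ω) μ :=
  integrable_mul_of_le hqf hmq (hI.1 t ht) hq (hI.nonneg_and_le ht)

lemma Jfun_le_one (hI : IsSolution μ q β γ η f I) (hmq : Measurable q) (hq : ∀ ω, 0 ≤ q ω)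
    (hqf : ∫ ω, q ω * f ω ∂μ = 1) (ht : 0 ≤ t) : Jfun μ q I t ≤ 1 := by
  have hqfI : Integrable (fun ω => q ω * f ω) μ := .of_integral_ne_zero (by simp [hqf])
  rw [← hqf]
  exact integral_mono (hI.integrable_mul hmq hq hqfI ht) hqfI
    fun ω => mul_le_mul_of_nonneg_left (hI.nonneg_and_le ht ω).2 (hq ω)

lemma Jfun_le_integral_add_exp (hI : IsSolution μ q β γ η f I) (hmq : Measurable q)
    (hmβ : Measurable β) (hmγ : Measurable γ) (hmη : Measurable η) (hmf : Measurable f)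
    (hq : ∀ ω, 0 ≤ q ω) (hβ : ∀ ω, 0 ≤ β ω) (hγ : ∀ ω, ε ≤ γ ω) (hη : ∀ ω, 0 ≤ η ω)
    (hε : 0 < ε) (hqf : ∫ ω, q ω * f ω ∂μ = 1) (hηf : ∀ᵐ ω ∂μ, η ω * f ω = 0) (hb : 0 ≤ b)
    (ht₀ : 0 ≤ t₀) (hJ : ∀ t ≥ t₀, Jfun μ q I t ≤ b) (ht : t₀ ≤ t) :
    Jfun μ q I t ≤ ∫ ω, q ω * hfun β γ η f b ω ∂μ + exp (-ε * (t - t₀)) := by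
  have hqfI : Integrable (fun ω => q ω * f ω) μ := .of_integral_ne_zero (by simp [hqf])
  have hf : ∀ ω, 0 ≤ f ω := fun ω =>
    (hI.nonneg_and_le le_rfl ω).1.trans (hI.nonneg_and_le le_rfl ω).2
  have hh := integrable_mul_hfun hmq hmβ hmγ hmη hmf hqfI hq hβ (fun ω => hε.le.trans (hγ ω))
    hη hf hb
  have he := hqfI.mul_const (exp (-ε * (t - t₀)))
  calc Jfun μ q I t
      ≤ ∫ ω, q ω * hfun β γ η f b ω + q ω * f ω * exp (-ε * (t - t₀)) ∂μ := by
        refine integral_mono_ae (hI.integrable_mul hmq hq hqfI (ht₀.trans ht)) (hh.add he) ?_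
        filter_upwards [hηf] with ω hω
        exact (mul_le_mul_of_nonneg_left (hI.le_hfun_add_mul_exp hε (hβ ω) (hγ ω) (hη ω) hω hb
          ht₀ hJ ht) (hq ω)).trans_eq (by ring)
    _ = ∫ ω, q ω * hfun β γ η f b ω ∂μ + exp (-ε * (t - t₀)) := by
        rw [integral_add hh he, integral_mul_const, hqf, one_mul]

lemma isBoundedUnder_le_Jfun (hI : IsSolution μ q β γ η f I) (hmq : Measurable q)
    (hq : ∀ ω, 0 ≤ q ω) (hqf : ∫ ω, q ω * f ω ∂μ = 1) :
    IsBoundedUnder (· ≤ ·) atTop (Jfun μ q I) :=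
  isBoundedUnder_of_eventually_le (eventually_atTop.2 ⟨0, fun _ => hI.Jfun_le_one hmq hq hqf⟩)

lemma limsup_Jfun_nonneg (hI : IsSolution μ q β γ η f I) (hmq : Measurable q)
    (hq : ∀ ω, 0 ≤ q ω) (hqf : ∫ ω, q ω * f ω ∂μ = 1) : 0 ≤ limsup (Jfun μ q I) atTop :=
  le_limsup_of_frequently_le (eventually_atTop.2 ⟨0, fun _ => hI.Jfun_nonneg hq⟩).frequently
    (hI.isBoundedUnder_le_Jfun hmq hq hqf)

lemma exists_forall_ge_Jfun_le (hI : IsSolution μ q β γ η f I) (hmq : Measurable q)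
    (hq : ∀ ω, 0 ≤ q ω) (hqf : ∫ ω, q ω * f ω ∂μ = 1) (hb : limsup (Jfun μ q I) atTop < b) :
    ∃ t₀ ≥ 0, ∀ t ≥ t₀, Jfun μ q I t ≤ b := by
  obtain ⟨t₀, ht₀⟩ := eventually_atTop.1 ((eventually_lt_of_limsup_lt hb
    (hI.isBoundedUnder_le_Jfun hmq hq hqf)).and (eventually_ge_atTop 0))
  exact ⟨t₀, (ht₀ t₀ le_rfl).2, fun t ht => (ht₀ t ht).1.le⟩

lemma limsup_Jfun_le (hI : IsSolution μ q β γ η f I) (hmq : Measurable q) (hmβ : Measurable β)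
    (hmγ : Measurable γ) (hmη : Measurable η) (hmf : Measurable f) (hq : ∀ ω, 0 ≤ q ω)
    (hβ : ∀ ω, 0 ≤ β ω) (hγ : ∀ ω, ε ≤ γ ω) (hη : ∀ ω, 0 ≤ η ω) (hε : 0 < ε)
    (hqf : ∫ ω, q ω * f ω ∂μ = 1) (hηf : ∀ᵐ ω ∂μ, η ω * f ω = 0) (hb0 : 0 ≤ b)
    (hb : limsup (Jfun μ q I) atTop < b) :
    limsup (Jfun μ q I) atTop ≤ ∫ ω, q ω * hfun β γ η f b ω ∂μ := by
  obtain ⟨t₀, ht₀, hJ⟩ := hI.exists_forall_ge_Jfun_le hmq hq hqf hb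
  refine limsup_le_of_le_add_mul_exp (C := 1) (t₀ := t₀) hε
    (isBoundedUnder_of_eventually_ge (eventually_atTop.2 ⟨0, fun _ => hI.Jfun_nonneg hq⟩))
    fun t ht => ?_
  rw [one_mul]
  exact hI.Jfun_le_integral_add_exp hmq hmβ hmγ hmη hmf hq hβ hγ hη hε hqf hηf hb0 ht₀ hJ ht

lemma limsup_le_hfun (hI : IsSolution μ q β γ η f I) (hmq : Measurable q) (hq : ∀ ω, 0 ≤ q ω)
    (hβ : 0 ≤ β ω) (hγ : ε ≤ γ ω) (hη : 0 ≤ η ω) (hε : 0 < ε) (hqf : ∫ ω, q ω * f ω ∂μ = 1)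
    (hηf : η ω * f ω = 0) (hb0 : 0 ≤ b) (hb : limsup (Jfun μ q I) atTop < b) :
    limsup (fun t => I t ω) atTop ≤ hfun β γ η f b ω := by
  obtain ⟨t₀, ht₀, hJ⟩ := hI.exists_forall_ge_Jfun_le hmq hq hqf hb
  exact limsup_le_of_le_add_mul_exp hε (isBoundedUnder_of_eventually_ge
      (eventually_atTop.2 ⟨0, fun t ht => (hI.nonneg_and_le ht ω).1⟩))
    fun t ht => hI.le_hfun_add_mul_exp hε hβ hγ hη hηf hb0 ht₀ hJ ht

lemma tendsto_zero_of_limsup_Jfun_eq_zero (hI : IsSolution μ q β γ η f I) (hmq : Measurable q)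
    (hq : ∀ ω, 0 ≤ q ω) (hβ : 0 ≤ β ω) (hγ : ε ≤ γ ω) (hη : 0 ≤ η ω) (hε : 0 < ε)
    (hqf : ∫ ω, q ω * f ω ∂μ = 1) (hηf : η ω * f ω = 0)
    (hJ : limsup (Jfun μ q I) atTop = 0) : Tendsto (fun t => I t ω) atTop (𝓝 0) := by
  have hγ₀ : 0 < γ ω := hε.trans_le hγ
  have hh : Tendsto (fun b => hfun β γ η f b ω) (𝓝[>] 0) (𝓝 0) := by
    simp_rw [hfun_of_mul_eq_zero hηf]
    have : ContinuousAt (fun b => f ω * (β ω * b / (β ω * b + γ ω))) 0 := by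
      fun_prop (disch := simp [hγ₀.ne'])
    simpa using this.tendsto.mono_left nhdsWithin_le_nhds
  have hlimsup : limsup (fun t => I t ω) atTop ≤ 0 :=
    ge_of_tendsto hh (eventually_nhdsWithin_of_forall fun b hb =>
      hI.limsup_le_hfun hmq hq hβ hγ hη hε hqf hηf (le_of_lt hb) (hJ ▸ hb))
  have hlo : ∀ᶠ t in atTop, 0 ≤ I t ω :=
    eventually_atTop.2 ⟨0, fun t ht => (hI.nonneg_and_le ht ω).1⟩
  have hhi : ∀ᶠ t in atTop, I t ω ≤ f ω :=
    eventually_atTop.2 ⟨0, fun t ht => (hI.nonneg_and_le ht ω).2⟩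
  exact tendsto_of_le_liminf_of_limsup_le
    (le_liminf_of_le (isBoundedUnder_of_eventually_le hhi).isCoboundedUnder_ge hlo) hlimsup
    (isBoundedUnder_of_eventually_le hhi) (isBoundedUnder_of_eventually_ge hlo)

end IsSolution

end SIS

theorem stmt_13_general
    {Ω : Type*} [MeasurableSpace Ω] (μ : Measure Ω) [IsProbabilityMeasure μ]
    (q β γ η f : Ω → ℝ)
    (hmq : Measurable q) (hmβ : Measurable β) (hmγ : Measurable γ)
    (hmη : Measurable η) (hmf : Measurable f)
    (h0q : ∀ ω, 0 ≤ q ω) (h0β : ∀ ω, 0 ≤ β ω) (h0γ : ∀ ω, 0 ≤ γ ω)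
    (h0η : ∀ ω, 0 ≤ η ω) (h0f : ∀ ω, 0 ≤ f ω)
    (M : ℝ) (hbβ : ∀ ω, β ω ≤ M) (hbγ : ∀ ω, γ ω ≤ M)
    (hqfint : ∫ ω, q ω * f ω ∂μ = 1)
    (ε : ℝ) (hε : 0 < ε) (hβε : ∀ ω, ε ≤ β ω) (hγε : ∀ ω, ε ≤ γ ω)
    (hηf : ∀ᵐ ω ∂μ, η ω * f ω = 0)
    (R₀ : ℝ) (hR₀ : R₀ = ∫ ω, q ω * f ω * (β ω / γ ω) ∂μ) (hR₀le : R₀ ≤ 1)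
    (I : ℝ → Ω → ℝ) (hI : IsSolution μ q β γ η f I) :
    ∀ᵐ ω ∂μ, Tendsto (fun t => I t ω) atTop (𝓝 0) := by
  obtain ⟨ω₀⟩ := nonempty_of_isProbabilityMeasure μ
  have hM : 0 < M := hε.trans_le ((hγε ω₀).trans (hbγ ω₀))
  have hqfI : Integrable (fun ω => q ω * f ω) μ := .of_integral_ne_zero (by simp [hqfint])
  have hR : Integrable (fun ω => q ω * f ω * (β ω / γ ω)) μ :=
    hqfI.mul_bdd (hmβ.div hmγ).aestronglyMeasurable <| ae_of_all _ fun ω => by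
      rw [Real.norm_eq_abs, abs_of_nonneg (div_nonneg (h0β ω) (h0γ ω))]
      exact div_le_div₀ hM.le (hbβ ω) hε (hγε ω)
  set A := limsup (Jfun μ q I) atTop
  have hA0 : 0 ≤ A := hI.limsup_Jfun_nonneg hmq h0q hqfint
  have hA : A = 0 := by
    refine eq_zero_of_forall_lt_add_sq_div_le hA0 (div_pos hε hM) fun b hAb => ?_
    have hb : 0 ≤ b := hA0.trans hAb.le
    have hAT := hI.limsup_Jfun_le hmq hmβ hmγ hmη hmf h0q h0β hγε h0η hε hqfint hηf hb hAb
    have hT := integral_mul_hfun_le (integrable_mul_hfun hmq hmβ hmγ hmη hmf hqfI h0q h0β h0γ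
      h0η h0f hb) hR hqfint h0q h0f hηf hε hβε hγε hbγ hA0 hAb.le
    rw [← hR₀] at hT
    nlinarith [mul_le_mul_of_nonneg_right hR₀le hb]
  filter_upwards [hηf] with ω hω
  exact hI.tendsto_zero_of_limsup_Jfun_eq_zero hmq h0q (h0β ω) (hγε ω) (h0η ω) hε hqfint hω hA

/-- If `η f = 0` a.e. and `R₀ ≤ 1`, then for every solution `I(t,ω) → 0` as
`t → ∞` for a.e. `ω`. -/
theorem stmt_13
    {Ω : Type*} [MeasurableSpace Ω] (μ : Measure Ω) [IsProbabilityMeasure μ]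
    (q β γ η f : Ω → ℝ)
    (hmq : Measurable q) (hmβ : Measurable β) (hmγ : Measurable γ)
    (hmη : Measurable η) (hmf : Measurable f)
    (h0q : ∀ ω, 0 ≤ q ω) (h0β : ∀ ω, 0 ≤ β ω) (h0γ : ∀ ω, 0 ≤ γ ω)
    (h0η : ∀ ω, 0 ≤ η ω) (h0f : ∀ ω, 0 ≤ f ω)
    (M : ℝ) (hbq : ∀ ω, q ω ≤ M) (hbβ : ∀ ω, β ω ≤ M) (hbγ : ∀ ω, γ ω ≤ M)
    (hbη : ∀ ω, η ω ≤ M) (hbf : ∀ ω, f ω ≤ M)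
    (hfint : ∫ ω, f ω ∂μ = 1) (hqfint : ∫ ω, q ω * f ω ∂μ = 1)
    (hqpos : ∀ᵐ ω ∂μ, 0 < q ω)
    (ε : ℝ) (hε : 0 < ε) (hβε : ∀ ω, ε ≤ β ω) (hγε : ∀ ω, ε ≤ γ ω)
    (hηf : ∀ᵐ ω ∂μ, η ω * f ω = 0)
    (R₀ : ℝ) (hR₀ : R₀ = ∫ ω, q ω * f ω * (β ω / γ ω) ∂μ) (hR₀le : R₀ ≤ 1)
    (I : ℝ → Ω → ℝ) (hI : IsSolution μ q β γ η f I) :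
    ∀ᵐ ω ∂μ, Tendsto (fun t => I t ω) atTop (𝓝 0) :=
  stmt_13_general μ q β γ η f hmq hmβ hmγ hmη hmf h0q h0β h0γ h0η h0f M hbβ hbγ hqfint ε hε hβε hγε
    hηf R₀ hR₀ hR₀le I hI
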